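/- arXiv:1801.09419 — 2 statements merged into one kernel-verified Lean document; each statement's English description precedes it below -/
import Mathlib

section
/- Let q⋆ be an optimal k-points NN quantizer for P with codebook c⋆ = {c⋆₁,…,c⋆_k} and let q be a k-points NN quantizer with codebook c = {c₁,…,c_k}. Set M = max_{i≠j} |c⋆_i − c⋆_j|. Assume P(𝔉(c⋆)) = P(𝔉(c)) = 0 and that the identity permutation attains the minimum in the definitions of both F₁(q⋆,q) and F₂(q⋆,q). Then 𝐅(q⋆,q)² ≤ F₁(q⋆,q)² + F₂(q⋆,q)·(F₁(q⋆,q) + M)². -/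
open MeasureTheory Metric Set ENNReal

noncomputable section

variable {E : Type*} [NormedAddCommGroup E] [InnerProductSpace ℝ E] [MeasurableSpace E]

/-- A `k`-points nearest-neighbor quantizer: a Borel-measurable map whose image is a set of
exactly `k` points and which maps every point to a nearest point of its codebook. -/
def IsNNQuantizer (k : ℕ) (q : E → E) : Prop :=
  Measurable q ∧ (∃ s : Finset E, s.card = k ∧ Set.range q = ↑s) ∧
    ∀ x : E, ∀ c ∈ Set.range q, ‖x - q x‖ ≤ ‖x - c‖

/-- The risk (distortion) of a quantizer with respect to `P`. -/
def risk (P : Measure E) (q : E → E) : ℝ := ∫ x, ‖x - q x‖ ^ 2 ∂P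

/-- An optimal `k`-points NN quantizer for `P`. -/
def IsOptimalQuantizer (P : Measure E) (k : ℕ) (q : E → E) : Prop :=
  IsNNQuantizer k q ∧ ∀ q', IsNNQuantizer k q' → risk P q ≤ risk P q'

/-- The absolute margin condition with parameter `l0` (with respect to the optimal quantizer
`qs`):  (1) the set `A(l0)` has full `P`-measure; (2) for every random variable `Y`
(encoded by a coupling `π` of the law `P` of `X` and the law of `Y`) with
`E|X - Y|² ≤ l0² E|X - qs X|²`, the map `q ↦ E|Y - q Y|²` over `k`-points NN quantizers has a
unique minimizer (uniqueness of its codebook). -/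
def AbsoluteMargin (P : Measure E) (k : ℕ) (qs : E → E) (l0 : ℝ) : Prop :=
  P {x | qs (x + l0 • (x - qs x)) = qs x} = 1 ∧
  ∀ π : Measure (E × E), IsProbabilityMeasure π → π.map Prod.fst = P →
    (∫ p, ‖p.1 - p.2‖ ^ 2 ∂π) ≤ l0 ^ 2 * ∫ x, ‖x - qs x‖ ^ 2 ∂P →
    ∃ q0, IsNNQuantizer k q0 ∧
      (∀ q', IsNNQuantizer k q' → risk (π.map Prod.snd) q0 ≤ risk (π.map Prod.snd) q') ∧
      ∀ q', IsNNQuantizer k q' →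
        (∀ q'', IsNNQuantizer k q'' → risk (π.map Prod.snd) q' ≤ risk (π.map Prod.snd) q'') →
        Set.range q' = Set.range q0

/-- Voronoi cell of the `j`-th point of the codebook `c`. -/
def Vcell (k : ℕ) (c : Fin k → E) (j : Fin k) : Set E := {x | ∀ l, ‖x - c j‖ ≤ ‖x - c l‖}

/-- The frontier of the Voronoi diagram generated by `c`. -/
def VorFrontier (k : ℕ) (c : Fin k → E) : Set E :=
  ⋃ (i) (j) (_ : i ≠ j), Vcell k c i ∩ Vcell k c j

/-- `F₁` between two codebooks: min over permutations of the max distance of matched centers. -/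
def F1 (k : ℕ) (c c' : Fin k → E) : ℝ :=
  ⨅ σ : Equiv.Perm (Fin k), ⨆ j, ‖c j - c' (σ j)‖

/-- `F₂` between two codebooks: the minimal `P`-mass of misclassified points. -/
def F2 (P : Measure E) (k : ℕ) (c c' : Fin k → E) : ℝ :=
  ⨅ σ : Equiv.Perm (Fin k), (P (⋃ j, Vcell k c j ∩ Vcell k c' (σ j))ᶜ).toReal

/-- `max_{i ≠ j} ‖c i - c j‖`. -/
def maxDist (k : ℕ) (c : Fin k → E) : ℝ :=
  ⨆ p : {p : Fin k × Fin k // p.1 ≠ p.2}, ‖c p.1.1 - c p.1.2‖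

/-- `min_{i ≠ j} ‖c i - c j‖`. -/
def minDist (k : ℕ) (c : Fin k → E) : ℝ :=
  ⨅ p : {p : Fin k × Fin k // p.1 ≠ p.2}, ‖c p.1.1 - c p.1.2‖

/-- The function `p⋆(t)` of Definition `def:pstar`, for the optimal codebook `cs` of the
optimal quantizer `qs`. -/
def pstar (P : Measure E) (k : ℕ) (cs : Fin k → E) (qs : E → E) (t : ℝ) : ℝ :=
  (P (⋃ i, {x | minDist k cs * infDist x (frontier (Vcell k cs i)) ≤
      2 * ‖x - qs x‖ * t + 2 * t ^ 2})).toReal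

/-- `F₁` between two quantizers, defined through enumerations of their codebooks. -/
def F1Q (k : ℕ) (q q' : E → E) : ℝ :=
  sInf {r | ∃ c c' : Fin k → E, Set.range c = Set.range q ∧ Set.range c' = Set.range q' ∧
    r = ⨆ j, ‖c j - c' j‖}

/-!
Off the Voronoi frontiers, a point lying in both `V_j(c⋆)` and `V_j(c)` is sent by `q⋆` to `c⋆_j`
and by `q` to `c_j`, so `|q x - q⋆ x| ≤ F₁` there. Everywhere else `q x = c_i` and `q⋆ x = c⋆_j`,
and `|c_i - c⋆_j| ≤ |c_i - c⋆_i| + |c⋆_i - c⋆_j| ≤ F₁ + M`. Since the second case has mass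
`F₂`, integrating the pointwise bound gives the claim.
-/

section TwoLevelBound

variable {α : Type*} [MeasurableSpace α] {μ : Measure α}

theorem integral_le_measureReal_univ_mul_add_measureReal_compl_mul [IsFiniteMeasure μ]
    {f : α → ℝ} {s : Set α} {a b : ℝ} (ha : 0 ≤ a) (hf : 0 ≤ᵐ[μ] f)
    (hfs : ∀ᵐ x ∂μ, x ∈ s → f x ≤ a) (hfb : ∀ᵐ x ∂μ, f x ≤ b) :
    ∫ x, f x ∂μ ≤ μ.real univ * a + μ.real sᶜ * b := by
  -- `s` need not be measurable: dominate by the indicator of a measurable hull of `sᶜ`.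
  set T := toMeasurable μ sᶜ
  have hT : MeasurableSet T := measurableSet_toMeasurable μ sᶜ
  have hint : Integrable (fun x => a + T.indicator (fun _ => b) x) μ :=
    (integrable_const a).add ((integrable_const b).indicator hT)
  calc ∫ x, f x ∂μ ≤ ∫ x, a + T.indicator (fun _ => b) x ∂μ := by
        refine integral_mono_of_nonneg hf hint ?_
        filter_upwards [hfs, hfb] with x hxs hxb
        by_cases hxT : x ∈ T
        · rw [indicator_of_mem hxT]
          linarith
        · rw [indicator_of_notMem hxT, add_zero]
          exact hxs (by_contra fun h => hxT (subset_toMeasurable μ sᶜ h))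
    _ = μ.real univ * a + μ.real sᶜ * b := by
        rw [integral_add (integrable_const a) ((integrable_const b).indicator hT),
          integral_const, integral_indicator_const b hT, measureReal_def μ T,
          measure_toMeasurable, ← measureReal_def, smul_eq_mul, smul_eq_mul]

end TwoLevelBound

section Voronoi

variable {E : Type*} [NormedAddCommGroup E] {k : ℕ}

theorem exists_eq_and_mem_Vcell {q : E → E} {c : Fin k → E} (hrange : range q = range c)
    (hnear : ∀ x, ∀ y ∈ range q, ‖x - q x‖ ≤ ‖x - y‖) (x : E) :
    ∃ i, q x = c i ∧ x ∈ Vcell k c i := by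
  obtain ⟨i, hi⟩ : q x ∈ range c := hrange ▸ mem_range_self x
  exact ⟨i, hi.symm, fun l => hi ▸ hnear x (c l) (hrange ▸ mem_range_self l)⟩

theorem eq_of_mem_Vcell_of_notMem_VorFrontier {c : Fin k → E} {x : E} {i j : Fin k}
    (hi : x ∈ Vcell k c i) (hj : x ∈ Vcell k c j) (hx : x ∉ VorFrontier k c) : i = j := by
  by_contra hij
  exact hx (mem_iUnion₂.mpr ⟨i, j, mem_iUnion.mpr ⟨hij, hi, hj⟩⟩)

theorem norm_sub_le_maxDist (c : Fin k → E) {i j : Fin k} (hij : i ≠ j) :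
    ‖c i - c j‖ ≤ maxDist k c :=
  le_ciSup (f := fun p : {p : Fin k × Fin k // p.1 ≠ p.2} => ‖c p.1.1 - c p.1.2‖)
    (Finite.bddAbove_range _) ⟨(i, j), hij⟩

theorem maxDist_nonneg (c : Fin k → E) : 0 ≤ maxDist k c :=
  Real.iSup_nonneg fun _ => norm_nonneg _

variable {cs c : Fin k → E}

theorem norm_sub_le_F1 (hF1id : F1 k cs c = ⨆ j, ‖cs j - c j‖) (j : Fin k) :
    ‖c j - cs j‖ ≤ F1 k cs c := by
  rw [norm_sub_rev, hF1id]
  exact le_ciSup (f := fun j => ‖cs j - c j‖) (Finite.bddAbove_range _) j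

theorem norm_sub_le_F1_add_maxDist (hF1id : F1 k cs c = ⨆ j, ‖cs j - c j‖) (i j : Fin k) :
    ‖c i - cs j‖ ≤ F1 k cs c + maxDist k cs := by
  by_cases hij : i = j
  · subst hij
    linarith [norm_sub_le_F1 hF1id i, maxDist_nonneg cs]
  · calc ‖c i - cs j‖ ≤ ‖c i - cs i‖ + ‖cs i - cs j‖ := norm_sub_le_norm_sub_add_norm_sub _ _ _
      _ ≤ F1 k cs c + maxDist k cs :=
        add_le_add (norm_sub_le_F1 hF1id i) (norm_sub_le_maxDist cs hij)

theorem norm_sub_le_F1_of_mem_Vcell (hF1id : F1 k cs c = ⨆ j, ‖cs j - c j‖) {x : E}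
    {i j l : Fin k} (hx : x ∈ Vcell k cs l ∩ Vcell k c l) (hi : x ∈ Vcell k c i)
    (hj : x ∈ Vcell k cs j)
    (hxcs : x ∉ VorFrontier k cs) (hxc : x ∉ VorFrontier k c) : ‖c i - cs j‖ ≤ F1 k cs c := by
  rw [eq_of_mem_Vcell_of_notMem_VorFrontier hi hx.2 hxc,
    eq_of_mem_Vcell_of_notMem_VorFrontier hj hx.1 hxcs]
  exact norm_sub_le_F1 hF1id l

end Voronoi

theorem stmt7_general
    (P : Measure E) [IsProbabilityMeasure P] (k : ℕ)
    (qs q : E → E) (cs c : Fin k → E)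
    (hcs_range : Set.range qs = Set.range cs) (hc_range : Set.range q = Set.range c)
    (hqs : IsOptimalQuantizer P k qs) (hq : IsNNQuantizer k q)
    (hfrontS : P (VorFrontier k cs) = 0) (hfront : P (VorFrontier k c) = 0)
    (hF1id : F1 k cs c = ⨆ j, ‖cs j - c j‖)
    (hF2id : F2 P k cs c = (P (⋃ j, Vcell k cs j ∩ Vcell k c j)ᶜ).toReal) :
    ∫ x, ‖q x - qs x‖ ^ 2 ∂P ≤
      F1 k cs c ^ 2 + F2 P k cs c * (F1 k cs c + maxDist k cs) ^ 2 := by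
  have hq_mem := exists_eq_and_mem_Vcell hc_range hq.2.2
  have hqs_mem := exists_eq_and_mem_Vcell hcs_range hqs.1.2.2
  have hbound : ∀ x, ‖q x - qs x‖ ^ 2 ≤ (F1 k cs c + maxDist k cs) ^ 2 := fun x => by
    obtain ⟨⟨i, hqi, -⟩, ⟨j, hqsj, -⟩⟩ := And.intro (hq_mem x) (hqs_mem x)
    rw [hqi, hqsj]
    exact pow_le_pow_left₀ (norm_nonneg _) (norm_sub_le_F1_add_maxDist hF1id i j) 2
  have hbound_matched : ∀ᵐ x ∂P, x ∈ ⋃ j, Vcell k cs j ∩ Vcell k c j →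
      ‖q x - qs x‖ ^ 2 ≤ F1 k cs c ^ 2 := by
    filter_upwards [measure_eq_zero_iff_ae_notMem.mp hfrontS,
      measure_eq_zero_iff_ae_notMem.mp hfront] with x hxcs hxc hx
    obtain ⟨l, hxl⟩ := mem_iUnion.mp hx
    obtain ⟨⟨i, hqi, hi⟩, ⟨j, hqsj, hj⟩⟩ := And.intro (hq_mem x) (hqs_mem x)
    rw [hqi, hqsj]
    exact pow_le_pow_left₀ (norm_nonneg _)
      (norm_sub_le_F1_of_mem_Vcell hF1id hxl hi hj hxcs hxc) 2
  have key := integral_le_measureReal_univ_mul_add_measureReal_compl_mul (sq_nonneg _)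
    (ae_of_all P fun x => sq_nonneg ‖q x - qs x‖) hbound_matched (ae_of_all P hbound)
  rwa [probReal_univ, one_mul, measureReal_def, ← hF2id] at key

/-- upper comparison of `𝐅²` with `F₁` and `F₂` (Subsection `sub:comp`). -/
theorem stmt7 [BorelSpace E] [CompleteSpace E] [SecondCountableTopology E]
    (P : Measure E) [IsProbabilityMeasure P] (k : ℕ) (hk : 1 ≤ k)
    (hmom : Integrable (fun x => ‖x‖ ^ 2) P)
    (hsupp : ∀ s : Finset E, s.card ≤ k → P (↑s : Set E) < 1)
    (qs q : E → E) (cs c : Fin k → E)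
    (hcs_inj : Function.Injective cs) (hc_inj : Function.Injective c)
    (hcs_range : Set.range qs = Set.range cs) (hc_range : Set.range q = Set.range c)
    (hqs : IsOptimalQuantizer P k qs) (hq : IsNNQuantizer k q)
    (hfrontS : P (VorFrontier k cs) = 0) (hfront : P (VorFrontier k c) = 0)
    (hF1id : F1 k cs c = ⨆ j, ‖cs j - c j‖)
    (hF2id : F2 P k cs c = (P (⋃ j, Vcell k cs j ∩ Vcell k c j)ᶜ).toReal) :
    ∫ x, ‖q x - qs x‖ ^ 2 ∂P ≤
      F1 k cs c ^ 2 + F2 P k cs c * (F1 k cs c + maxDist k cs) ^ 2 :=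
  stmt7_general P k qs q cs c hcs_range hc_range hqs hq hfrontS hfront hF1id hF2id
end
end

section
/- Let q⋆ be an optimal k-points NN quantizer for P with codebook c⋆ = {c⋆₁,…,c⋆_k} and let q be a k-points NN quantizer with codebook c = {c₁,…,c_k}. Set m = min_{i≠j} |c⋆_i − c⋆_j| and p_min = min_{1≤j≤k} P(V_j(c⋆)). Assume P(𝔉(c⋆)) = 0, that the identity permutation attains the minimum in the definition of F₁(q⋆,q), and that F₁(q⋆,q) ≤ m/2. Then 𝐅(q⋆,q)² ≥ p_min·F₁(q⋆,q)². -/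
/-!
Let `c⋆_{j₀}` be the worst-matched center, `|c⋆_{j₀} - c_{j₀}| = F₁`. Off the frontier, on the
cell `V_{j₀}(c⋆)` we have `q⋆ = c⋆_{j₀}`, while `q` takes a value `c_i`. If `i = j₀` the distance is
`F₁` by the choice of `j₀`; otherwise `|c_i - c⋆_{j₀}| ≥ m - F₁ ≥ F₁` because `c_i` lies within
`F₁` of `c⋆_i` and `F₁ ≤ m/2`. Since the frontier is `P`-null, `|q - q⋆|² ≥ F₁²` on a set of
mass `P(V_{j₀}(c⋆)) ≥ p_min`.
-/

open MeasureTheory Metric Set ENNReal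

noncomputable section

variable {E : Type*} [NormedAddCommGroup E] [InnerProductSpace ℝ E] [MeasurableSpace E]

section

variable {V : Type*} [NormedAddCommGroup V]

theorem minDist_le_norm_sub {k : ℕ} (c : Fin k → V) {i j : Fin k} (hij : i ≠ j) :
    minDist k c ≤ ‖c i - c j‖ :=
  ciInf_le ⟨0, by rintro r ⟨p, rfl⟩; exact norm_nonneg _⟩
    (⟨(i, j), hij⟩ : {p : Fin k × Fin k // p.1 ≠ p.2})

theorem norm_sub_le_of_le_minDist_half {k : ℕ} {c c' : Fin k → V} {j₀ : Fin k}
    (hmax : ∀ j, ‖c' j - c j‖ ≤ ‖c' j₀ - c j₀‖) (hsep : ‖c' j₀ - c j₀‖ ≤ minDist k c' / 2)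
    (i : Fin k) : ‖c' j₀ - c j₀‖ ≤ ‖c i - c' j₀‖ := by
  rcases eq_or_ne i j₀ with rfl | hi
  · exact (norm_sub_rev _ _).le
  · have htri : ‖c' i - c' j₀‖ ≤ ‖c' i - c i‖ + ‖c i - c' j₀‖ :=
      norm_sub_le_norm_sub_add_norm_sub _ _ _
    linarith [minDist_le_norm_sub c' hi, hmax i]

namespace IsNNQuantizer

variable [MeasurableSpace V] {k : ℕ} {q : V → V}

theorem mem_vcell (hq : IsNNQuantizer k q) {c : Fin k → V} (hrange : range q = range c) {x : V}
    {i : Fin k} (hi : q x = c i) : x ∈ Vcell k c i := fun l => by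
  simpa only [hi] using hq.2.2 x (c l) (hrange ▸ mem_range_self l)

theorem apply_eq_of_mem_vcell (hq : IsNNQuantizer k q) {c : Fin k → V}
    (hrange : range q = range c) {x : V} {j : Fin k} (hx : x ∈ Vcell k c j)
    (hxF : x ∉ VorFrontier k c) : q x = c j := by
  obtain ⟨i, hi⟩ : q x ∈ range c := hrange ▸ mem_range_self x
  rcases eq_or_ne i j with rfl | hij
  · exact hi.symm
  · exact (hxF (mem_iUnion.2 ⟨i, mem_iUnion.2 ⟨j, mem_iUnion.2
      ⟨hij, hq.mem_vcell hrange hi.symm, hx⟩⟩⟩)).elim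

theorem exists_norm_le (hq : IsNNQuantizer k q) : ∃ C, ∀ x, ‖q x‖ ≤ C := by
  obtain ⟨s, -, hs⟩ := hq.2.1
  obtain ⟨C, hC⟩ := isBounded_iff_forall_norm_le.1 (hs ▸ s.finite_toSet.isBounded)
  exact ⟨C, fun x => hC _ (mem_range_self x)⟩

theorem memLp [BorelSpace V] [SecondCountableTopology V] (hq : IsNNQuantizer k q)
    (P : Measure V) [IsFiniteMeasure P] (p : ℝ≥0∞) : MemLp q p P := by
  obtain ⟨C, hC⟩ := hq.exists_norm_le
  exact MemLp.of_bound hq.1.aestronglyMeasurable C (ae_of_all _ hC)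

end IsNNQuantizer

end

theorem measureReal_mul_le_integral_of_ae_le {α : Type*} [MeasurableSpace α] {μ : Measure α}
    [IsFiniteMeasure μ] {f : α → ℝ} {s : Set α} {a : ℝ} (ha : 0 ≤ a) (hf0 : 0 ≤ᵐ[μ] f)
    (hf : Integrable f μ) (hs : ∀ᵐ x ∂μ, x ∈ s → a ≤ f x) : μ.real s * a ≤ ∫ x, f x ∂μ := by
  have hsub : μ.real s ≤ μ.real {x | a ≤ f x} :=
    toReal_mono (measure_ne_top _ _) (measure_mono_ae (hs.mono fun x hx h => hx h))
  calc μ.real s * a ≤ a * μ.real {x | a ≤ f x} := by rw [mul_comm]; gcongr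
    _ ≤ ∫ x, f x ∂μ := mul_meas_ge_le_integral_of_nonneg hf0 hf a

theorem stmt9_general [BorelSpace E] [SecondCountableTopology E]
    (P : Measure E) [IsProbabilityMeasure P] (k : ℕ) (hk : 1 ≤ k)
    (qs q : E → E) (cs c : Fin k → E)
    (hcs_range : Set.range qs = Set.range cs) (hc_range : Set.range q = Set.range c)
    (hqs : IsOptimalQuantizer P k qs) (hq : IsNNQuantizer k q)
    (hfrontS : P (VorFrontier k cs) = 0)
    (hF1id : F1 k cs c = ⨆ j, ‖cs j - c j‖)
    (hF1m : F1 k cs c ≤ minDist k cs / 2) :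
    (⨅ j, (P (Vcell k cs j)).toReal) * F1 k cs c ^ 2 ≤ ∫ x, ‖q x - qs x‖ ^ 2 ∂P := by
  have : Nonempty (Fin k) := ⟨⟨0, hk⟩⟩
  obtain ⟨j₀, hj₀⟩ := Finite.exists_max fun j => ‖cs j - c j‖
  have hF1 : F1 k cs c = ‖cs j₀ - c j₀‖ :=
    hF1id.trans <| le_antisymm (ciSup_le hj₀)
      (le_ciSup (f := fun j => ‖cs j - c j‖) (finite_range _).bddAbove j₀)
  have hbound : ∀ᵐ x ∂P, x ∈ Vcell k cs j₀ → F1 k cs c ^ 2 ≤ ‖q x - qs x‖ ^ 2 := by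
    filter_upwards [measure_eq_zero_iff_ae_notMem.1 hfrontS] with x hxF hx
    obtain ⟨i, hi⟩ : q x ∈ range c := hc_range ▸ mem_range_self x
    rw [hqs.1.apply_eq_of_mem_vcell hcs_range hx hxF, ← hi, hF1]
    gcongr
    exact norm_sub_le_of_le_minDist_half hj₀ (hF1 ▸ hF1m) i
  calc (⨅ j, (P (Vcell k cs j)).toReal) * F1 k cs c ^ 2
      ≤ P.real (Vcell k cs j₀) * F1 k cs c ^ 2 := by
        gcongr
        exact ciInf_le (finite_range _).bddBelow j₀
    _ ≤ ∫ x, ‖q x - qs x‖ ^ 2 ∂P :=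
        measureReal_mul_le_integral_of_ae_le (sq_nonneg _) (ae_of_all _ fun _ => sq_nonneg _)
          (((hq.memLp P 2).sub (hqs.1.memLp P 2)).integrable_norm_pow two_ne_zero) hbound

/-- lower comparison of `𝐅²` with `F₁` via `p_min` (Subsection `sub:comp`). -/
theorem stmt9 [BorelSpace E] [CompleteSpace E] [SecondCountableTopology E]
    (P : Measure E) [IsProbabilityMeasure P] (k : ℕ) (hk : 1 ≤ k)
    (hmom : Integrable (fun x => ‖x‖ ^ 2) P)
    (hsupp : ∀ s : Finset E, s.card ≤ k → P (↑s : Set E) < 1)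
    (qs q : E → E) (cs c : Fin k → E)
    (hcs_inj : Function.Injective cs) (hc_inj : Function.Injective c)
    (hcs_range : Set.range qs = Set.range cs) (hc_range : Set.range q = Set.range c)
    (hqs : IsOptimalQuantizer P k qs) (hq : IsNNQuantizer k q)
    (hfrontS : P (VorFrontier k cs) = 0)
    (hF1id : F1 k cs c = ⨆ j, ‖cs j - c j‖)
    (hF1m : F1 k cs c ≤ minDist k cs / 2) :
    (⨅ j, (P (Vcell k cs j)).toReal) * F1 k cs c ^ 2 ≤ ∫ x, ‖q x - qs x‖ ^ 2 ∂P :=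
  stmt9_general P k hk qs q cs c hcs_range hc_range hqs hq hfrontS hF1id hF1m
end
end
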